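/- (L∞ bound on internal phosphorus, Lemma 3.4, one-dimensional case.) If (B, p, P) is a positive classical solution of the one-dimensional system on [0,L]×[0,T] whose initial data satisfy Q_m ≤ p(x,0)/B(x,0) ≤ Q_M for every x ∈ [0,L], then p(x,t) ≤ Q_M·max{ max_{y∈[0,L]} B(y,0), B̄ } for every (x,t) ∈ [0,L]×[0,T], where B̄ = (1/k)·( (r/(z_m·l + D))·((Q_M − Q_m)/Q_M)·ln((H + I_in)/H) − K_bg ). -/

import Mathlib

open Set Filter Topology

/-- Light intensity at depth `s` with biomass `B`:  `I(s,B) = I_in · exp(−(K_bg + k·B)·s)`. -/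
noncomputable def lightI (I_in K_bg k : ℝ) (s B : ℝ) : ℝ :=
  I_in * Real.exp (-((K_bg + k * B) * s))

/-- Light-limited growth factor
`h(B) = ln((H + I_in)/(H + I(z_m,B)))/(z_m·(k·B + K_bg))`. -/
noncomputable def hfun (z_m k K_bg H I_in : ℝ) (B : ℝ) : ℝ :=
  Real.log ((H + I_in) / (H + lightI I_in K_bg k z_m B)) / (z_m * (k * B + K_bg))

/-- Uptake function `η(B,p,P) = ρ_m·((Q_M·B − p)/(Q_M − Q_m))·(P/(P + M))`. -/
noncomputable def etafun (ρ_m Q_m Q_M M : ℝ) (B p P : ℝ) : ℝ :=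
  ρ_m * ((Q_M * B - p) / (Q_M - Q_m)) * (P / (P + M))

/-- Partial derivative in time (`t` is the second argument). -/
noncomputable def pt (f : ℝ → ℝ → ℝ) (x t : ℝ) : ℝ := deriv (fun τ => f x τ) t

/-- Partial derivative in space (`x` is the first argument). -/
noncomputable def px (f : ℝ → ℝ → ℝ) (x t : ℝ) : ℝ := deriv (fun y => f y t) x

/-- Second partial derivative in space. -/
noncomputable def pxx (f : ℝ → ℝ → ℝ) (x t : ℝ) : ℝ := deriv (fun y => px f y t) x

/-- The regularity required of each component of a classical solution on
`[0,L]×[0,T]`: continuity on `[0,L]×[0,T]`, existence of the partial derivatives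
`∂_t`, `∂_x`, `∂_xx` on `[0,L]×(0,T]`, and their continuity there. -/
def ClassReg (L T : ℝ) (f : ℝ → ℝ → ℝ) : Prop :=
  ContinuousOn (fun q : ℝ × ℝ => f q.1 q.2) (Icc 0 L ×ˢ Icc 0 T) ∧
  (∀ x ∈ Icc (0:ℝ) L, ∀ t ∈ Ioc (0:ℝ) T,
    DifferentiableAt ℝ (fun τ => f x τ) t ∧
    DifferentiableAt ℝ (fun y => f y t) x ∧
    DifferentiableAt ℝ (fun y => px f y t) x) ∧
  ContinuousOn (fun q : ℝ × ℝ => pt f q.1 q.2) (Icc 0 L ×ˢ Ioc 0 T) ∧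
  ContinuousOn (fun q : ℝ × ℝ => px f q.1 q.2) (Icc 0 L ×ˢ Ioc 0 T) ∧
  ContinuousOn (fun q : ℝ × ℝ => pxx f q.1 q.2) (Icc 0 L ×ˢ Ioc 0 T)

/-- A positive classical solution of the one-dimensional
reaction–diffusion–advection system on `[0,L]×[0,T]`. -/
def IsPosClassicalSol
    (α β β_B β_P r Q_m Q_M z_m k K_bg H I_in l D ρ_m M P_h : ℝ)
    (v : ℝ → ℝ) (L T : ℝ) (B p P : ℝ → ℝ → ℝ) : Prop :=
  -- regularity
  ClassReg L T B ∧ ClassReg L T p ∧ ClassReg L T P ∧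
  -- strict positivity on [0,L]×[0,T]
  (∀ x ∈ Icc (0:ℝ) L, ∀ t ∈ Icc (0:ℝ) T,
    0 < B x t ∧ 0 < p x t ∧ 0 < P x t) ∧
  -- the three PDEs on [0,L]×(0,T]
  (∀ x ∈ Icc (0:ℝ) L, ∀ t ∈ Ioc (0:ℝ) T,
    pt B x t = α * pxx B x t - β_B * v t * px B x t
      + r * (1 - Q_m * B x t / p x t) * hfun z_m k K_bg H I_in (B x t) * B x t
      - l * B x t - (D / z_m) * B x t) ∧
  (∀ x ∈ Icc (0:ℝ) L, ∀ t ∈ Ioc (0:ℝ) T,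
    pt p x t = α * pxx p x t - β_B * v t * px p x t
      + etafun ρ_m Q_m Q_M M (B x t) (p x t) (P x t)
      - l * p x t - (D / z_m) * p x t) ∧
  (∀ x ∈ Icc (0:ℝ) L, ∀ t ∈ Ioc (0:ℝ) T,
    pt P x t = β * pxx P x t - β_P * v t * px P x t
      + (D / z_m) * (P_h - P x t)
      - etafun ρ_m Q_m Q_M M (B x t) (p x t) (P x t)
      + l * p x t) ∧
  -- Neumann boundary conditions
  (∀ t ∈ Ioc (0:ℝ) T,
    px B 0 t = 0 ∧ px B L t = 0 ∧ px p 0 t = 0 ∧ px p L t = 0 ∧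
    px P 0 t = 0 ∧ px P L t = 0)

/-- The explicit bound
`B̄ = (1/k)·( (r/(z_m·l + D))·((Q_M − Q_m)/Q_M)·ln((H + I_in)/H) − K_bg )`. -/
noncomputable def Bbar (r Q_m Q_M z_m k K_bg H I_in l D : ℝ) : ℝ :=
  (1 / k) * ((r / (z_m * l + D)) * ((Q_M - Q_m) / Q_M) * Real.log ((H + I_in) / H)
    - K_bg)

section Helpers



lemma second_deriv_nonpos_at_max {L : ℝ} (hL : 0 < L) (g g' : ℝ → ℝ) {x : ℝ}
    (hx : x ∈ Icc (0:ℝ) L)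
    (hd : ∀ y ∈ Icc (0:ℝ) L, HasDerivAt g (g' y) y)
    (hd2 : DifferentiableAt ℝ g' x)
    (hmax : ∀ y ∈ Icc (0:ℝ) L, g y ≤ g x)
    (h0 : g' x = 0) : deriv g' x ≤ 0 := by
  by_contra hpos
  push_neg at hpos
  have hslope : Tendsto (slope g' x) (𝓝[≠] x) (𝓝 (deriv g' x)) :=
    hasDerivAt_iff_tendsto_slope.mp hd2.hasDerivAt
  have hev : ∀ᶠ ξ in 𝓝[≠] x, 0 < slope g' x ξ :=
    hslope.eventually (eventually_gt_nhds hpos)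
  have hcont : ∀ a b : ℝ, Icc a b ⊆ Icc 0 L → ContinuousOn g (Icc a b) :=
    fun a b hab y hy => ((hd y (hab hy)).continuousAt).continuousWithinAt
  rcases eq_or_lt_of_le hx.2 with hxL | hxL
  · -- x = L : approach from the left
    have hev' : ∀ᶠ ξ in 𝓝[<] x, 0 < slope g' x ξ :=
      hev.filter_mono (nhdsWithin_mono x fun y hy => ne_of_lt hy)
    obtain ⟨a, ha, hsub⟩ := mem_nhdsLT_iff_exists_Ioo_subset.mp hev'
    have hx0 : (0:ℝ) < x := hxL ▸ hL
    set y := (max a 0 + x) / 2 with hy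
    have hay : a < y := by
      have h1 : a ≤ max a 0 := le_max_left _ _
      have h2 : max a 0 < x := max_lt ha hx0
      simp only [hy]; nlinarith
    have hyx : y < x := by
      have h2 : max a 0 < x := max_lt ha hx0
      simp only [hy]; nlinarith
    have hy0 : (0:ℝ) ≤ y := by
      have : (0:ℝ) ≤ max a 0 := le_max_right _ _
      simp only [hy]; nlinarith
    have hsubIcc : Icc y x ⊆ Icc 0 L := fun z hz => ⟨le_trans hy0 hz.1, hxL ▸ hz.2⟩
    obtain ⟨c, hc, hceq⟩ := exists_hasDerivAt_eq_slope g g' hyx (hcont _ _ hsubIcc)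
      (fun z hz => hd z (hsubIcc (Ioo_subset_Icc_self hz)))
    have hgy : g y ≤ g x := hmax y ⟨hy0, hxL ▸ le_of_lt hyx⟩
    have hc' : 0 ≤ g' c := by
      rw [hceq]; exact div_nonneg (by linarith) (by linarith [hyx])
    have hmem := hsub ⟨lt_trans hay hc.1, hc.2⟩
    have : slope g' x c ≤ 0 := by
      rw [slope_def_field, h0, sub_zero]
      exact div_nonpos_of_nonneg_of_nonpos hc' (by linarith [hc.2])
    exact absurd (hmem : 0 < slope g' x c) (not_lt.mpr this)
  · -- x < L : approach from the right
    have hev' : ∀ᶠ ξ in 𝓝[>] x, 0 < slope g' x ξ :=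
      hev.filter_mono (nhdsWithin_mono x fun y hy => ne_of_gt hy)
    obtain ⟨b, hb, hsub⟩ := mem_nhdsGT_iff_exists_Ioo_subset.mp hev'
    set y := (x + min b L) / 2 with hy
    have hyb : y < min b L := by
      have h1 : x < min b L := lt_min hb hxL
      simp only [hy]; nlinarith
    have hxy : x < y := by
      have h1 : x < min b L := lt_min hb hxL
      simp only [hy]; nlinarith
    have hyL : y ≤ L := le_of_lt (lt_of_lt_of_le hyb (min_le_right _ _))
    have hsubIcc : Icc x y ⊆ Icc 0 L := fun z hz => ⟨le_trans hx.1 hz.1, le_trans hz.2 hyL⟩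
    obtain ⟨c, hc, hceq⟩ := exists_hasDerivAt_eq_slope g g' hxy (hcont _ _ hsubIcc)
      (fun z hz => hd z (hsubIcc (Ioo_subset_Icc_self hz)))
    have hgy : g y ≤ g x := hmax y ⟨le_trans hx.1 (le_of_lt hxy), hyL⟩
    have hc' : g' c ≤ 0 := by
      rw [hceq]; exact div_nonpos_of_nonpos_of_nonneg (by linarith) (by linarith [hxy])
    have hmem := hsub ⟨hc.1, lt_of_lt_of_le (lt_of_lt_of_le hc.2 (le_of_lt hyb)) (min_le_left _ _)⟩
    have : slope g' x c ≤ 0 := by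
      rw [slope_def_field, h0, sub_zero]
      exact div_nonpos_of_nonpos_of_nonneg hc' (by linarith [hc.1])
    exact absurd (hmem : 0 < slope g' x c) (not_lt.mpr this)

lemma second_deriv_nonneg_at_min {L : ℝ} (hL : 0 < L) (g g' : ℝ → ℝ) {x : ℝ}
    (hx : x ∈ Icc (0:ℝ) L)
    (hd : ∀ y ∈ Icc (0:ℝ) L, HasDerivAt g (g' y) y)
    (hd2 : DifferentiableAt ℝ g' x)
    (hmin : ∀ y ∈ Icc (0:ℝ) L, g x ≤ g y)
    (h0 : g' x = 0) : 0 ≤ deriv g' x := by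
  have := second_deriv_nonpos_at_max hL (fun y => -g y) (fun y => -g' y) hx
    (fun y hy => (hd y hy).neg) hd2.neg (fun y hy => neg_le_neg (hmin y hy))
    (by simp [h0])
  rwa [deriv.fun_neg, neg_nonpos] at this

lemma time_deriv_le_of_left {g : ℝ → ℝ} {t ε : ℝ} (ht : 0 < t)
    (hdiff : DifferentiableAt ℝ g t)
    (hle : ∀ s ∈ Ioo (0:ℝ) t, g t + ε * (t - s) ≤ g s) : deriv g t ≤ -ε := by
  have hslope : Tendsto (slope g t) (𝓝[≠] t) (𝓝 (deriv g t)) :=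
    hasDerivAt_iff_tendsto_slope.mp hdiff.hasDerivAt
  have hslope' : Tendsto (slope g t) (𝓝[<] t) (𝓝 (deriv g t)) :=
    hslope.mono_left (nhdsWithin_mono t fun y hy => ne_of_lt hy)
  have hev : ∀ᶠ s in 𝓝[<] t, slope g t s ≤ -ε := by
    filter_upwards [Ioo_mem_nhdsLT_of_mem (⟨ht, le_refl t⟩ : t ∈ Ioc 0 t)] with s hs
    have h1 := hle s hs
    rw [slope_def_field]
    rw [div_le_iff_of_neg (by linarith [hs.2] : s - t < 0)]
    nlinarith [hs.2]
  exact le_of_tendsto hslope' hev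

lemma time_deriv_ge_of_left {g : ℝ → ℝ} {t ε : ℝ} (ht : 0 < t)
    (hdiff : DifferentiableAt ℝ g t)
    (hle : ∀ s ∈ Ioo (0:ℝ) t, g s + ε * (t - s) ≤ g t) : ε ≤ deriv g t := by
  have := time_deriv_le_of_left (g := fun s => -g s) (ε := ε) ht hdiff.neg
    (fun s hs => by have := hle s hs; linarith)
  rw [deriv.fun_neg] at this; linarith

lemma hfun_nonneg {z_m k K_bg H I_in b : ℝ} (hzm : 0 < z_m) (hk : 0 < k)
    (hKbg : 0 < K_bg) (hH : 0 < H) (hIin : 0 < I_in) (hb : 0 < b) :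
    0 ≤ hfun z_m k K_bg H I_in b := by
  have hden : 0 < z_m * (k * b + K_bg) := by positivity
  have hexp : Real.exp (-((K_bg + k * b) * z_m)) ≤ 1 :=
    Real.exp_le_one_iff.mpr (by nlinarith)
  have hIz : 0 < lightI I_in K_bg k z_m b := by
    unfold lightI; positivity
  apply div_nonneg _ hden.le
  apply Real.log_nonneg
  rw [le_div_iff₀ (by unfold lightI at hIz ⊢; linarith)]
  unfold lightI at hIz ⊢
  nlinarith [mul_le_mul_of_nonneg_left hexp hIin.le]

lemma hfun_le {z_m k K_bg H I_in b : ℝ} (hzm : 0 < z_m) (hk : 0 < k)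
    (hKbg : 0 < K_bg) (hH : 0 < H) (hIin : 0 < I_in) (hb : 0 < b) :
    hfun z_m k K_bg H I_in b ≤
      Real.log ((H + I_in) / H) / (z_m * (k * b + K_bg)) := by
  have hden : 0 < z_m * (k * b + K_bg) := by positivity
  have hIz : 0 < lightI I_in K_bg k z_m b := by unfold lightI; positivity
  unfold hfun
  rw [div_le_div_iff_of_pos_right hden]
  apply Real.log_le_log (by positivity)
  apply div_le_div_of_nonneg_left (by linarith) hH (by linarith)

end Helpers

set_option maxHeartbeats 1000000

/-- L∞ bound on internal phosphorus, Lemma 3.4, one-dimensional case: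
`p(x,t) ≤ Q_M·max{ max_{y∈[0,L]} B(y,0), B̄ }` on `[0,L]×[0,T]`. -/
theorem internal_phosphorus_Linfty_bound
    (α β β_B β_P r Q_m Q_M z_m k K_bg H I_in l D ρ_m M P_h : ℝ)
    (hα : 0 < α) (hβ : 0 < β) (hβB : 0 < β_B) (hβP : 0 < β_P) (hr : 0 < r)
    (hQm : 0 < Q_m) (hQM : 0 < Q_M) (hzm : 0 < z_m) (hk : 0 < k)
    (hKbg : 0 < K_bg) (hH : 0 < H) (hIin : 0 < I_in) (hl : 0 < l) (hD : 0 < D)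
    (hρm : 0 < ρ_m) (hM : 0 < M) (hQmM : Q_m < Q_M) (hPh : 0 ≤ P_h)
    (L T : ℝ) (hL : 0 < L) (hT : 0 < T) (v : ℝ → ℝ) (hv : Continuous v)
    (B p P : ℝ → ℝ → ℝ)
    (hsol : IsPosClassicalSol α β β_B β_P r Q_m Q_M z_m k K_bg H I_in l D ρ_m M P_h
      v L T B p P)
    (hinit : ∀ x ∈ Icc (0:ℝ) L, Q_m ≤ p x 0 / B x 0 ∧ p x 0 / B x 0 ≤ Q_M) :
    ∀ x ∈ Icc (0:ℝ) L, ∀ t ∈ Icc (0:ℝ) T,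
      p x t ≤ Q_M * max (sSup ((fun y => B y 0) '' Icc (0:ℝ) L))
        (Bbar r Q_m Q_M z_m k K_bg H I_in l D) := by
  obtain ⟨hregB, hregp, hregP, hpos, hpdeB, hpdep, hpdeP, hbc⟩ := hsol
  have hQQ : 0 < Q_M - Q_m := by linarith
  have hlD : (0:ℝ) < l + D / z_m := by positivity
  have hK : IsCompact (Icc (0:ℝ) L ×ˢ Icc (0:ℝ) T) := isCompact_Icc.prod isCompact_Icc
  have hKne : (Icc (0:ℝ) L ×ˢ Icc (0:ℝ) T).Nonempty :=
    ⟨(0, 0), ⟨⟨le_refl 0, hL.le⟩, ⟨le_refl 0, hT.le⟩⟩⟩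
  have hw0 : ∀ x ∈ Icc (0:ℝ) L, 0 ≤ Q_M * B x 0 - p x 0 := by
    intro x hx
    have hB := (hpos x hx 0 ⟨le_refl 0, hT.le⟩).1
    have h2 := (hinit x hx).2
    rw [div_le_iff₀ hB] at h2; linarith
  -- Step 1 with epsilon: Q_M·B − p ≥ −ε(1+t)
  have step1eps : ∀ ε > 0, ∀ x ∈ Icc (0:ℝ) L, ∀ t ∈ Icc (0:ℝ) T,
      0 ≤ Q_M * B x t - p x t + ε * (1 + t) := by
    intro ε hε
    set F : ℝ × ℝ → ℝ := fun q => Q_M * B q.1 q.2 - p q.1 q.2 + ε * (1 + q.2) with hF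
    have hFcont : ContinuousOn F (Icc (0:ℝ) L ×ˢ Icc (0:ℝ) T) := by
      apply ContinuousOn.add
      · exact (continuousOn_const.mul hregB.1).sub hregp.1
      · exact (continuous_const.mul (continuous_const.add continuous_snd)).continuousOn
    obtain ⟨q0, hq0, hq0min⟩ := hK.exists_isMinOn hKne hFcont
    suffices hge : 0 ≤ F q0 by
      intro x hx t ht
      have h1 := isMinOn_iff.mp hq0min (x, t) ⟨hx, ht⟩
      simp only [hF] at h1 hge
      linarith
    by_contra hneg
    push_neg at hneg
    have ht0pos : 0 < q0.2 := by
      rcases eq_or_lt_of_le hq0.2.1 with h | h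
      · exfalso
        have h1 := hw0 q0.1 hq0.1
        simp only [hF] at hneg
        rw [← h] at hneg
        nlinarith
      · exact h
    have htIoc : q0.2 ∈ Ioc (0:ℝ) T := ⟨ht0pos, hq0.2.2⟩
    obtain ⟨hBt, hBx, hBxx⟩ := hregB.2.1 q0.1 hq0.1 q0.2 htIoc
    obtain ⟨hpt', hpx', hpxx⟩ := hregp.2.1 q0.1 hq0.1 q0.2 htIoc
    set g : ℝ → ℝ := fun y => Q_M * B y q0.2 - p y q0.2 with hg
    set g' : ℝ → ℝ := fun y => Q_M * px B y q0.2 - px p y q0.2 with hg'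
    have hd : ∀ y ∈ Icc (0:ℝ) L, HasDerivAt g (g' y) y := by
      intro y hy
      obtain ⟨_, hBy, _⟩ := hregB.2.1 y hy q0.2 htIoc
      obtain ⟨_, hpy, _⟩ := hregp.2.1 y hy q0.2 htIoc
      exact (hBy.hasDerivAt.const_mul Q_M).sub hpy.hasDerivAt
    have hd2 : DifferentiableAt ℝ g' q0.1 := (hBxx.const_mul Q_M).sub hpxx
    have hming : ∀ y ∈ Icc (0:ℝ) L, g q0.1 ≤ g y := by
      intro y hy
      have h1 := isMinOn_iff.mp hq0min (y, q0.2) ⟨hy, hq0.2⟩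
      simp only [hF, hg] at h1 ⊢
      linarith
    have h0 : g' q0.1 = 0 := by
      obtain ⟨hbB0, hbBL, hbp0, hbpL, _, _⟩ := hbc q0.2 htIoc
      rcases eq_or_lt_of_le hq0.1.1 with h | h
      · simp only [hg']
        rw [← h, hbB0, hbp0]; ring
      · rcases eq_or_lt_of_le hq0.1.2 with h2 | h2
        · simp only [hg']
          rw [h2, hbBL, hbpL]; ring
        · have hloc : IsLocalMin g q0.1 := by
            filter_upwards [Icc_mem_nhds h h2] with y hy using hming y hy
          have hder := hloc.deriv_eq_zero
          have heq : deriv g q0.1 = g' q0.1 := (hd q0.1 hq0.1).deriv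
          rw [← heq, hder]
    have h2nd : 0 ≤ deriv g' q0.1 :=
      second_deriv_nonneg_at_min hL g g' hq0.1 hd hd2 hming h0
    have hderg' : deriv g' q0.1 = Q_M * pxx B q0.1 q0.2 - pxx p q0.1 q0.2 := by
      simp only [hg']
      rw [deriv_fun_sub (hBxx.const_mul Q_M) hpxx, deriv_const_mul Q_M hBxx]
      rfl
    have htd : deriv (fun τ => Q_M * B q0.1 τ - p q0.1 τ) q0.2 ≤ -ε := by
      apply time_deriv_le_of_left ht0pos ((hBt.const_mul Q_M).sub hpt')
      intro s hs
      have h1 := isMinOn_iff.mp hq0min (q0.1, s) ⟨hq0.1, ⟨hs.1.le, hs.2.le.trans hq0.2.2⟩⟩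
      simp only [hF] at h1
      simp only [Pi.sub_apply]
      linarith
    have htd' : deriv (fun τ => Q_M * B q0.1 τ - p q0.1 τ) q0.2
        = Q_M * pt B q0.1 q0.2 - pt p q0.1 q0.2 := by
      rw [deriv_fun_sub (hBt.const_mul Q_M) hpt', deriv_const_mul Q_M hBt]
      rfl
    have eB := hpdeB q0.1 hq0.1 q0.2 htIoc
    have ep := hpdep q0.1 hq0.1 q0.2 htIoc
    obtain ⟨hBpos, hppos, hPpos⟩ := hpos q0.1 hq0.1 q0.2 ⟨ht0pos.le, hq0.2.2⟩
    have hwneg : Q_M * B q0.1 q0.2 - p q0.1 q0.2 < 0 := by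
      simp only [hF] at hneg
      linarith [mul_pos hε (show (0:ℝ) < 1 + q0.2 by linarith)]
    have hgrow : 0 ≤ r * (1 - Q_m * B q0.1 q0.2 / p q0.1 q0.2)
        * hfun z_m k K_bg H I_in (B q0.1 q0.2) * B q0.1 q0.2 := by
      have h1 : Q_m * B q0.1 q0.2 / p q0.1 q0.2 < 1 := by
        rw [div_lt_one hppos]; nlinarith
      exact mul_nonneg (mul_nonneg (mul_nonneg hr.le (by linarith))
        (hfun_nonneg hzm hk hKbg hH hIin hBpos)) hBpos.le
    have heta : etafun ρ_m Q_m Q_M M (B q0.1 q0.2) (p q0.1 q0.2) (P q0.1 q0.2) ≤ 0 := by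
      unfold etafun
      have h1 : (Q_M * B q0.1 q0.2 - p q0.1 q0.2) / (Q_M - Q_m) < 0 :=
        div_neg_of_neg_of_pos hwneg hQQ
      have h2 : 0 < P q0.1 q0.2 / (P q0.1 q0.2 + M) := div_pos hPpos (by linarith)
      nlinarith [mul_pos (mul_pos hρm h2) (neg_pos.mpr h1)]
    have hx0' : Q_M * px B q0.1 q0.2 - px p q0.1 q0.2 = 0 := by
      have := h0; simp only [hg'] at this; exact this
    have hid : Q_M * pt B q0.1 q0.2 - pt p q0.1 q0.2
        = α * (Q_M * pxx B q0.1 q0.2 - pxx p q0.1 q0.2)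
          - β_B * v q0.2 * (Q_M * px B q0.1 q0.2 - px p q0.1 q0.2)
          + Q_M * (r * (1 - Q_m * B q0.1 q0.2 / p q0.1 q0.2)
              * hfun z_m k K_bg H I_in (B q0.1 q0.2) * B q0.1 q0.2)
          - etafun ρ_m Q_m Q_M M (B q0.1 q0.2) (p q0.1 q0.2) (P q0.1 q0.2)
          - (l + D / z_m) * (Q_M * B q0.1 q0.2 - p q0.1 q0.2) := by
      rw [eB, ep]; ring
    have t1 : 0 ≤ α * (Q_M * pxx B q0.1 q0.2 - pxx p q0.1 q0.2) :=
      mul_nonneg hα.le (hderg' ▸ h2nd)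
    have t2 : β_B * v q0.2 * (Q_M * px B q0.1 q0.2 - px p q0.1 q0.2) = 0 := by
      rw [hx0', mul_zero]
    have t3 : 0 ≤ Q_M * (r * (1 - Q_m * B q0.1 q0.2 / p q0.1 q0.2)
        * hfun z_m k K_bg H I_in (B q0.1 q0.2) * B q0.1 q0.2) := mul_nonneg hQM.le hgrow
    have t5 : (l + D / z_m) * (Q_M * B q0.1 q0.2 - p q0.1 q0.2) ≤ 0 := by
      nlinarith
    have hfinal : 0 ≤ Q_M * pt B q0.1 q0.2 - pt p q0.1 q0.2 := by
      rw [hid]; linarith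
    rw [htd'] at htd
    linarith
  -- Step 1: p ≤ Q_M·B
  have step1 : ∀ x ∈ Icc (0:ℝ) L, ∀ t ∈ Icc (0:ℝ) T, p x t ≤ Q_M * B x t := by
    intro x hx t ht
    by_contra hcon
    push_neg at hcon
    have hc : 0 < p x t - Q_M * B x t := by linarith
    have hT1 : (0:ℝ) < 2 * (1 + T) := by linarith
    have hε : 0 < (p x t - Q_M * B x t) / (2 * (1 + T)) := div_pos hc hT1
    have h1 := step1eps _ hε x hx t ht
    have h2 : (p x t - Q_M * B x t) / (2 * (1 + T)) * (1 + t)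
        ≤ (p x t - Q_M * B x t) / (2 * (1 + T)) * (1 + T) :=
      mul_le_mul_of_nonneg_left (by linarith [ht.2]) hε.le
    have h3 : (p x t - Q_M * B x t) / (2 * (1 + T)) * (1 + T)
        = (p x t - Q_M * B x t) / 2 := by
      have h1T : (1:ℝ) + T ≠ 0 := by positivity
      field_simp
      try ring
    linarith
  -- Setup for step 2
  have hcB0 : ContinuousOn (fun y => B y 0) (Icc (0:ℝ) L) := by
    have hmap : MapsTo (fun y : ℝ => ((y, (0:ℝ)) : ℝ × ℝ)) (Icc (0:ℝ) L)
        (Icc (0:ℝ) L ×ˢ Icc (0:ℝ) T) := fun y hy => ⟨hy, ⟨le_refl 0, hT.le⟩⟩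
    exact hregB.1.comp ((continuous_id.prodMk continuous_const).continuousOn) hmap
  have hbdd : BddAbove ((fun y => B y 0) '' Icc (0:ℝ) L) :=
    (isCompact_Icc.image_of_continuousOn hcB0).bddAbove
  set S0 := sSup ((fun y => B y 0) '' Icc (0:ℝ) L) with hS0
  set N := max S0 (Bbar r Q_m Q_M z_m k K_bg H I_in l D) with hN
  have hB0le : ∀ x ∈ Icc (0:ℝ) L, B x 0 ≤ N := fun x hx =>
    le_trans (le_csSup hbdd ⟨x, hx, rfl⟩) (le_max_left _ _)
  have hΛ : 0 ≤ Real.log ((H + I_in) / H) :=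
    Real.log_nonneg (by rw [le_div_iff₀ hH]; linarith)
  -- Step 2 with epsilon
  have step2eps : ∀ ε > 0, ∀ x ∈ Icc (0:ℝ) L, ∀ t ∈ Icc (0:ℝ) T,
      B x t - ε * t ≤ N := by
    intro ε hε
    set G : ℝ × ℝ → ℝ := fun q => B q.1 q.2 - ε * q.2 with hG
    have hGcont : ContinuousOn G (Icc (0:ℝ) L ×ˢ Icc (0:ℝ) T) :=
      hregB.1.sub (continuous_const.mul continuous_snd).continuousOn
    obtain ⟨q0, hq0, hq0max⟩ := hK.exists_isMaxOn hKne hGcont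
    suffices hle : G q0 ≤ N by
      intro x hx t ht
      exact le_trans (isMaxOn_iff.mp hq0max (x, t) ⟨hx, ht⟩) hle
    by_contra hgt
    push_neg at hgt
    simp only [hG] at hgt
    have ht0pos : 0 < q0.2 := by
      rcases eq_or_lt_of_le hq0.2.1 with h | h
      · exfalso
        have h1 := hB0le q0.1 hq0.1
        rw [← h] at hgt
        nlinarith
      · exact h
    have htIoc : q0.2 ∈ Ioc (0:ℝ) T := ⟨ht0pos, hq0.2.2⟩
    obtain ⟨hBt, hBx, hBxx⟩ := hregB.2.1 q0.1 hq0.1 q0.2 htIoc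
    have hmaxg : ∀ y ∈ Icc (0:ℝ) L, B y q0.2 ≤ B q0.1 q0.2 := by
      intro y hy
      have h1 := isMaxOn_iff.mp hq0max (y, q0.2) ⟨hy, hq0.2⟩
      simp only [hG] at h1
      linarith
    have h0 : px B q0.1 q0.2 = 0 := by
      obtain ⟨hbB0, hbBL, _, _, _, _⟩ := hbc q0.2 htIoc
      rcases eq_or_lt_of_le hq0.1.1 with h | h
      · rw [← h]; exact hbB0
      · rcases eq_or_lt_of_le hq0.1.2 with h2 | h2
        · rw [h2]; exact hbBL
        · have hloc : IsLocalMax (fun y => B y q0.2) q0.1 := by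
            filter_upwards [Icc_mem_nhds h h2] with y hy using hmaxg y hy
          exact hloc.deriv_eq_zero
    have hd : ∀ y ∈ Icc (0:ℝ) L, HasDerivAt (fun y' => B y' q0.2) (px B y q0.2) y :=
      fun y hy => ((hregB.2.1 y hy q0.2 htIoc).2.1).hasDerivAt
    have h2nd : pxx B q0.1 q0.2 ≤ 0 :=
      second_deriv_nonpos_at_max hL _ _ hq0.1 hd hBxx hmaxg h0
    have htd : ε ≤ pt B q0.1 q0.2 := by
      apply time_deriv_ge_of_left ht0pos hBt
      intro s hs
      have h1 := isMaxOn_iff.mp hq0max (q0.1, s) ⟨hq0.1, ⟨hs.1.le, hs.2.le.trans hq0.2.2⟩⟩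
      simp only [hG] at h1
      linarith
    have eB := hpdeB q0.1 hq0.1 q0.2 htIoc
    obtain ⟨hBpos, hppos, _⟩ := hpos q0.1 hq0.1 q0.2 ⟨ht0pos.le, hq0.2.2⟩
    have hBgt : Bbar r Q_m Q_M z_m k K_bg H I_in l D < B q0.1 q0.2 := by
      have h2 := le_max_right S0 (Bbar r Q_m Q_M z_m k K_bg H I_in l D)
      rw [← hN] at h2
      nlinarith [mul_pos hε ht0pos]
    have hbq : p q0.1 q0.2 ≤ Q_M * B q0.1 q0.2 :=
      step1 q0.1 hq0.1 q0.2 ⟨ht0pos.le, hq0.2.2⟩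
    have hfrac : 1 - Q_m * B q0.1 q0.2 / p q0.1 q0.2 ≤ (Q_M - Q_m) / Q_M := by
      have h1 : Q_m / Q_M ≤ Q_m * B q0.1 q0.2 / p q0.1 q0.2 := by
        rw [div_le_div_iff₀ hQM hppos]
        nlinarith
      have h2 : (Q_M - Q_m) / Q_M = 1 - Q_m / Q_M := by field_simp
      linarith
    have hhb0 : 0 ≤ hfun z_m k K_bg H I_in (B q0.1 q0.2) :=
      hfun_nonneg hzm hk hKbg hH hIin hBpos
    have hhb1 : hfun z_m k K_bg H I_in (B q0.1 q0.2)
        ≤ Real.log ((H + I_in) / H) / (z_m * (k * B q0.1 q0.2 + K_bg)) :=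
      hfun_le hzm hk hKbg hH hIin hBpos
    have hden : 0 < z_m * (k * B q0.1 q0.2 + K_bg) := by positivity
    have hzlD : (0:ℝ) < z_m * l + D := by positivity
    have hkey : r * ((Q_M - Q_m) / Q_M) * Real.log ((H + I_in) / H)
        < (l + D / z_m) * (z_m * (k * B q0.1 q0.2 + K_bg)) := by
      have hBbareq : k * Bbar r Q_m Q_M z_m k K_bg H I_in l D
          = r / (z_m * l + D) * ((Q_M - Q_m) / Q_M) * Real.log ((H + I_in) / H)
            - K_bg := by
        have hk' : k ≠ 0 := ne_of_gt hk
        have hzlD' : z_m * l + D ≠ 0 := ne_of_gt hzlD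
        have hQM' : Q_M ≠ 0 := ne_of_gt hQM
        unfold Bbar
        field_simp
      have h1 : r / (z_m * l + D) * ((Q_M - Q_m) / Q_M) * Real.log ((H + I_in) / H)
          < k * B q0.1 q0.2 + K_bg := by
        linarith [mul_lt_mul_of_pos_left hBgt hk, hBbareq]
      have h2 : (l + D / z_m) * (z_m * (k * B q0.1 q0.2 + K_bg))
          = (z_m * l + D) * (k * B q0.1 q0.2 + K_bg) := by
        have hzm' : z_m ≠ 0 := ne_of_gt hzm
        field_simp
        try ring
      rw [h2]
      calc r * ((Q_M - Q_m) / Q_M) * Real.log ((H + I_in) / H)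
          = (z_m * l + D) * (r / (z_m * l + D) * ((Q_M - Q_m) / Q_M)
              * Real.log ((H + I_in) / H)) := by
            have hzlD' : z_m * l + D ≠ 0 := ne_of_gt hzlD
            field_simp
        _ < (z_m * l + D) * (k * B q0.1 q0.2 + K_bg) :=
            mul_lt_mul_of_pos_left h1 hzlD
    have hrq : 0 ≤ r * ((Q_M - Q_m) / Q_M) := mul_nonneg hr.le (div_nonneg hQQ.le hQM.le)
    have c1 : r * (1 - Q_m * B q0.1 q0.2 / p q0.1 q0.2)
          * hfun z_m k K_bg H I_in (B q0.1 q0.2)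
        ≤ r * ((Q_M - Q_m) / Q_M) * hfun z_m k K_bg H I_in (B q0.1 q0.2) :=
      mul_le_mul_of_nonneg_right (by nlinarith) hhb0
    have c2 : r * ((Q_M - Q_m) / Q_M) * hfun z_m k K_bg H I_in (B q0.1 q0.2)
        ≤ r * ((Q_M - Q_m) / Q_M)
          * (Real.log ((H + I_in) / H) / (z_m * (k * B q0.1 q0.2 + K_bg))) :=
      mul_le_mul_of_nonneg_left hhb1 hrq
    have c3 : r * ((Q_M - Q_m) / Q_M)
        * (Real.log ((H + I_in) / H) / (z_m * (k * B q0.1 q0.2 + K_bg)))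
        < l + D / z_m := by
      have hre : r * ((Q_M - Q_m) / Q_M)
          * (Real.log ((H + I_in) / H) / (z_m * (k * B q0.1 q0.2 + K_bg)))
          = (r * ((Q_M - Q_m) / Q_M) * Real.log ((H + I_in) / H))
            / (z_m * (k * B q0.1 q0.2 + K_bg)) := by ring
      rw [hre, div_lt_iff₀ hden]
      linarith [hkey]
    have hcoef : r * (1 - Q_m * B q0.1 q0.2 / p q0.1 q0.2)
        * hfun z_m k K_bg H I_in (B q0.1 q0.2) < l + D / z_m :=
      lt_of_le_of_lt (c1.trans c2) c3
    have t3 : r * (1 - Q_m * B q0.1 q0.2 / p q0.1 q0.2)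
          * hfun z_m k K_bg H I_in (B q0.1 q0.2) * B q0.1 q0.2
        - l * B q0.1 q0.2 - D / z_m * B q0.1 q0.2 < 0 := by
      linarith [mul_pos (sub_pos.mpr hcoef) hBpos]
    have t1 : α * pxx B q0.1 q0.2 ≤ 0 := by
      linarith [mul_nonneg hα.le (neg_nonneg.mpr h2nd)]
    rw [eB, h0] at htd
    linarith [t1, t3]
  -- Step 2: B ≤ N
  have step2 : ∀ x ∈ Icc (0:ℝ) L, ∀ t ∈ Icc (0:ℝ) T, B x t ≤ N := by
    intro x hx t ht
    by_contra hcon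
    push_neg at hcon
    have hc : 0 < B x t - N := by linarith
    have hε : 0 < (B x t - N) / (2 * T) := div_pos hc (by linarith)
    have h1 := step2eps _ hε x hx t ht
    have h2 : (B x t - N) / (2 * T) * t ≤ (B x t - N) / (2 * T) * T :=
      mul_le_mul_of_nonneg_left ht.2 hε.le
    have h3 : (B x t - N) / (2 * T) * T = (B x t - N) / 2 := by
      have hT' : T ≠ 0 := ne_of_gt hT
      field_simp
    linarith
  intro x hx t ht
  have h1 := step1 x hx t ht
  have h2 := step2 x hx t ht
  calc p x t ≤ Q_M * B x t := h1
    _ ≤ Q_M * N := mul_le_mul_of_nonneg_left h2 hQM.le
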